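/- Let S ⊆ {0,1}^n be a binary space (closed under mod-2 addition) whose points do not all agree on a coordinate, and suppose S has GF(2)-rank r. Then there is a subset S' ⊆ S which is itself a binary space of rank at most r, whose points do not all agree on a coordinate, and which, after deleting duplicated and constant coordinates, is the cocycle space of a projective geometry PG(m-1,2) for some m ≤ r. -/

import Mathlib

/-- The ground set of `PG(m-1,2)`: the nonzero vectors of `GF(2)^m`. -/
abbrev PGpt (m : ℕ) := {v : Fin m → ZMod 2 // v ≠ 0}

/-- The cocycle space of `PG(m-1,2)`, viewed as a set of 0-1 points indexed by the ground
set: all maps `v ↦ u · v` for `u ∈ GF(2)^m`. -/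
def PGcocycleSpace (m : ℕ) : Set (PGpt m → ZMod 2) :=
  {q | ∃ u : Fin m → ZMod 2, ∀ v : PGpt m, q v = ∑ i, u i * v.1 i}

/-!
Regard the coordinates as linear functionals on `S` and take `S' ≤ S` minimal among the
subspaces on which no coordinate functional vanishes. For a nonzero functional `φ` on `S'`,
the hyperplane `ker φ` is a smaller subspace, so some coordinate vanishes on it; over `GF(2)`
that coordinate then coincides with `φ` on `S'`. Hence the restricted coordinates are exactly
the nonzero functionals on `S' ≅ GF(2)^m`, i.e. the points of `PG(m-1,2)`, every coordinate is
a duplicate of one of them, and projecting onto one representative per point identifies `S'`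
with the cocycle space.
-/

section Binary

variable {V : Type*} [AddCommGroup V] [Module (ZMod 2) V]

theorem Module.Dual.eq_of_ker_le_ker_of_ne_zero {φ ψ : Module.Dual (ZMod 2) V}
    (hker : LinearMap.ker φ ≤ LinearMap.ker ψ) (hψ : ψ ≠ 0) : ψ = φ := by
  have eq_one : ∀ a : ZMod 2, a ≠ 0 → a = 1 := by decide
  obtain ⟨y, hy⟩ : ∃ y, ψ y ≠ 0 := by
    by_contra! h
    exact hψ (LinearMap.ext h)
  have hφy : φ y ≠ 0 := fun h => hy (hker h)
  ext x
  by_cases hx : φ x = 0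
  · rw [hx]; exact hker hx
  · have hxy : x - y ∈ LinearMap.ker φ := by
      rw [LinearMap.mem_ker, map_sub, eq_one _ hx, eq_one _ hφy, sub_self]
    have := hker hxy
    rw [LinearMap.mem_ker, map_sub, sub_eq_zero] at this
    rw [this, eq_one _ hy, eq_one _ hx]

theorem exists_le_forall_dual_eq_domRestrict [FiniteDimensional (ZMod 2) V] {ι : Type*}
    (f : ι → Module.Dual (ZMod 2) V) {W : Submodule (ZMod 2) V}
    (hW : ∀ i, (f i).domRestrict W ≠ 0) :
    ∃ W' ≤ W, (∀ i, (f i).domRestrict W' ≠ 0) ∧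
      ∀ φ : Module.Dual (ZMod 2) W', φ ≠ 0 → ∃ i, (f i).domRestrict W' = φ := by
  obtain ⟨W', ⟨hW'W, hW'⟩, hmin⟩ := wellFounded_lt.has_min
    {U : Submodule (ZMod 2) V | U ≤ W ∧ ∀ i, (f i).domRestrict U ≠ 0} ⟨W, le_rfl, hW⟩
  refine ⟨W', hW'W, hW', fun φ hφ => ?_⟩
  set H := (LinearMap.ker φ).map W'.subtype
  have hHW' : H < W' := by
    simpa [H, Submodule.map_subtype_embedding_eq] using
      (Submodule.MapSubtype.orderEmbedding W').lt_iff_lt.mpr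
        (lt_top_iff_ne_top.mpr (mt LinearMap.ker_eq_top.mp hφ))
  obtain ⟨i, hi⟩ : ∃ i, (f i).domRestrict H = 0 := by
    by_contra! h
    exact hmin H ⟨hHW'.le.trans hW'W, h⟩ hHW'
  refine ⟨i, Module.Dual.eq_of_ker_le_ker_of_ne_zero (fun x hx => ?_) (hW' i)⟩
  exact LinearMap.congr_fun hi ⟨x, Submodule.mem_map_of_mem hx⟩

end Binary

section Labelling

variable {V ι : Type*} [AddCommGroup V] [Module (ZMod 2) V] {m : ℕ} {W : Submodule (ZMod 2) V}
  (b : Module.Basis (Fin m) (ZMod 2) W) {f : ι → Module.Dual (ZMod 2) V} {g : PGpt m → ι}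

theorem apply_eq_dotProduct_of_domRestrict_eq_constr
    (hg : ∀ w, (f (g w)).domRestrict W = b.constr (ZMod 2) w.1) (w : PGpt m) {p : V}
    (hp : p ∈ W) : f (g w) p = b.equivFun ⟨p, hp⟩ ⬝ᵥ w.1 := by
  simpa [Module.Basis.constr_apply_fintype, dotProduct, mul_comm] using
    LinearMap.congr_fun (hg w) ⟨p, hp⟩

theorem injective_of_domRestrict_eq_constr
    (hg : ∀ w, (f (g w)).domRestrict W = b.constr (ZMod 2) w.1) : Function.Injective g :=
  fun w w' h => Subtype.ext <| (b.constr (ZMod 2)).injective <| by rw [← hg, ← hg, h]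

theorem exists_forall_eq_of_domRestrict_eq_constr
    (hg : ∀ w, (f (g w)).domRestrict W = b.constr (ZMod 2) w.1) {j : ι}
    (hj : (f j).domRestrict W ≠ 0) : ∃ w, ∀ p ∈ W, f j p = f (g w) p := by
  obtain ⟨v, hv⟩ := (b.constr (ZMod 2)).surjective ((f j).domRestrict W)
  have hv0 : v ≠ 0 := by
    rintro rfl
    exact hj (by simpa using hv.symm)
  refine ⟨⟨v, hv0⟩, fun p hp => ?_⟩
  simpa [hv] using (LinearMap.congr_fun (hg ⟨v, hv0⟩) ⟨p, hp⟩).symm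

theorem bijOn_pgCocycleSpace_of_domRestrict_eq_constr
    (hg : ∀ w, (f (g w)).domRestrict W = b.constr (ZMod 2) w.1) :
    Set.BijOn (fun p w => f (g w) p) W (PGcocycleSpace m) := by
  have hcoord := apply_eq_dotProduct_of_domRestrict_eq_constr b hg
  refine ⟨fun p hp => ⟨_, fun w => hcoord w hp⟩, fun p hp q hq hpq => ?_, ?_⟩
  · have hcoeff : b.equivFun ⟨p, hp⟩ = b.equivFun ⟨q, hq⟩ := by
      funext k
      have := congr_fun hpq ⟨Pi.single k 1, by simp⟩
      simpa [hcoord _ hp, hcoord _ hq, dotProduct_single] using this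
    exact Subtype.ext_iff.mp (b.equivFun.injective hcoeff)
  · rintro q ⟨u, hq⟩
    refine ⟨b.equivFun.symm u, (b.equivFun.symm u).2, funext fun w => ?_⟩
    simp [hcoord, hq, dotProduct]

end Labelling

theorem Submodule.forall_proj_domRestrict_ne_zero_iff {ι R : Type*} [Semiring R]
    {W : Submodule R (ι → R)} :
    (∀ i, (LinearMap.proj i : (ι → R) →ₗ[R] R).domRestrict W ≠ 0) ↔
      ¬ ∃ (i : ι) (a : R), ∀ p ∈ W, p i = a := by
  refine ⟨fun hW ⟨i, a, ha⟩ => hW i ?_, fun hW i hi => hW ⟨i, 0, fun p hp => ?_⟩⟩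
  · ext ⟨p, hp⟩
    simp [ha p hp, ← ha 0 W.zero_mem]
  · exact LinearMap.congr_fun hi ⟨p, hp⟩

theorem stmt_17_general {n r : ℕ} (S : Set (Fin n → ZMod 2))
    (hagree : ¬ ∃ (i : Fin n) (a : ZMod 2), ∀ p ∈ S, p i = a)
    (hrank : ∃ B : Finset (Fin n → ZMod 2), ↑B ⊆ S ∧ B.card = r ∧
      LinearIndependent (ZMod 2) (Subtype.val : (↑B : Set (Fin n → ZMod 2)) → (Fin n → ZMod 2)) ∧
      S = ↑(Submodule.span (ZMod 2) (B : Set (Fin n → ZMod 2)))) :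
    ∃ S' ⊆ S, (∀ a ∈ S', ∀ b ∈ S', a + b ∈ S') ∧ 0 ∈ S' ∧
      (¬ ∃ (i : Fin n) (a : ZMod 2), ∀ p ∈ S', p i = a) ∧
      ∃ m ≤ r, ∃ g : PGpt m → Fin n,
        Function.Injective g ∧
        (∀ j : Fin n, (∃ a : ZMod 2, ∀ p ∈ S', p j = a) ∨
          ∃ w : PGpt m, (∀ p ∈ S', p j = p (g w)) ∨ (∀ p ∈ S', p j = p (g w) + 1)) ∧
        Set.BijOn (fun (p : Fin n → ZMod 2) (w : PGpt m) => p (g w)) S'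
          (PGcocycleSpace m) := by
  obtain ⟨B, -, rfl, -, rfl⟩ := hrank
  obtain ⟨W, hWS, hW0, hcover⟩ := exists_le_forall_dual_eq_domRestrict (fun i => LinearMap.proj i)
    (Submodule.forall_proj_domRestrict_ne_zero_iff.mpr hagree)
  let b := Module.finBasis (ZMod 2) W
  choose g hg using fun w : PGpt _ => hcover (b.constr (ZMod 2) w.1) (by simpa using w.2)
  refine ⟨W, hWS, fun _ hp _ hq => W.add_mem hp hq, W.zero_mem,
    Submodule.forall_proj_domRestrict_ne_zero_iff.mp hW0, _,
    (Submodule.finrank_mono hWS).trans (finrank_span_finset_le_card B), g,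
    injective_of_domRestrict_eq_constr b hg, fun j => Or.inr ?_,
    bijOn_pgCocycleSpace_of_domRestrict_eq_constr b hg⟩
  obtain ⟨w, hw⟩ := exists_forall_eq_of_domRestrict_eq_constr b hg (hW0 j)
  exact ⟨w, Or.inl hw⟩

/-- Let `S ⊆ {0,1}^n` be a binary space of GF(2)-rank `r` whose points do not
all agree on a coordinate. Then there is a binary subspace `S' ⊆ S` whose points do not all
agree on a coordinate such that, after deleting duplicated and constant coordinates
(keeping an injectively chosen representative coordinate `g w` for each element `w` of the
projective geometry), `S'` is (bijectively, via projection to the representative coordinates)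
the cocycle space of `PG(m-1,2)` for some `m ≤ r`. -/
theorem stmt_17 {n r : ℕ} (S : Set (Fin n → ZMod 2))
    (hspace : ∀ a ∈ S, ∀ b ∈ S, a + b ∈ S) (h0 : 0 ∈ S)
    (hagree : ¬ ∃ (i : Fin n) (a : ZMod 2), ∀ p ∈ S, p i = a)
    (hrank : ∃ B : Finset (Fin n → ZMod 2), ↑B ⊆ S ∧ B.card = r ∧
      LinearIndependent (ZMod 2) (Subtype.val : (↑B : Set (Fin n → ZMod 2)) → (Fin n → ZMod 2)) ∧
      S = ↑(Submodule.span (ZMod 2) (B : Set (Fin n → ZMod 2)))) :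
    ∃ S' ⊆ S, (∀ a ∈ S', ∀ b ∈ S', a + b ∈ S') ∧ 0 ∈ S' ∧
      (¬ ∃ (i : Fin n) (a : ZMod 2), ∀ p ∈ S', p i = a) ∧
      ∃ m ≤ r, ∃ g : PGpt m → Fin n,
        Function.Injective g ∧
        (∀ j : Fin n, (∃ a : ZMod 2, ∀ p ∈ S', p j = a) ∨
          ∃ w : PGpt m, (∀ p ∈ S', p j = p (g w)) ∨ (∀ p ∈ S', p j = p (g w) + 1)) ∧
        Set.BijOn (fun (p : Fin n → ZMod 2) (w : PGpt m) => p (g w)) S'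
          (PGcocycleSpace m) :=
  stmt_17_general S hagree hrank
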